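/- Let E ∈ ℝ^{2n×k} with E^T E = I_k and E^T J_{2n} E = 0, V = [E J_{2n}^T E], and P⊥ = I_{2n} − V V^T. Then J_{2n} P⊥ J_{2n}^T = P⊥, and consequently for any X ∈ ℝ^{2n×m}, ‖P⊥ X‖_F = ‖P⊥ J_{2n}^T X‖_F. -/

import Mathlib

/-!
Write `A = E Eᵀ`. Since `Jᵀ = -J`, one has `V Vᵀ = A - J A J`, and because `J² = -1` the
matrix `J` commutes with `A - J A J` for every `A`, hence with `P⊥`. As `J` is orthogonal this
gives `J P⊥ Jᵀ = P⊥`, and also `P⊥ Jᵀ X = Jᵀ P⊥ X`, whose Frobenius norm is that of `P⊥ X`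
because multiplication by an orthogonal matrix preserves it.
-/

open Matrix

attribute [local instance] Matrix.frobeniusNormedAddCommGroup

/-- The Poisson matrix `J_{2n} = [[0, I_n], [-I_n, 0]]`. -/
def PoissonMatrix (n : ℕ) : Matrix (Fin n ⊕ Fin n) (Fin n ⊕ Fin n) ℝ :=
  Matrix.fromBlocks 0 1 (-1) 0

theorem commute_sub_mul_mul_of_mul_self_eq_neg_one {R : Type*} [Ring R] {J : R}
    (hJ : J * J = -1) (a : R) : Commute J (a - J * a * J) := by
  have hJa : J * (J * a * J) = -(a * J) := by
    rw [← mul_assoc, ← mul_assoc, hJ, neg_one_mul, neg_mul]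
  have haJ : J * a * J * J = -(J * a) := by
    rw [mul_assoc, hJ, mul_neg_one]
  simp only [Commute, SemiconjBy, mul_sub, sub_mul, hJa, haJ]
  abel

namespace Matrix

variable {𝕜 : Type*} [RCLike 𝕜] {m n : Type*} [Fintype m] [Fintype n]

theorem frobenius_norm_sq_eq_re_trace (A : Matrix m n 𝕜) :
    ‖A‖ ^ 2 = RCLike.re (Aᴴ * A).trace := by
  have hsq : ‖A‖ ^ 2 = ∑ i, ∑ j, ‖A i j‖ ^ 2 := by
    rw [frobenius_norm_def, ← Real.rpow_natCast, ← Real.rpow_mul (by positivity)]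
    norm_num
  rw [hsq, Finset.sum_comm]
  simp [trace, mul_apply, RCLike.conj_mul]

theorem frobenius_norm_unitary_mul [DecidableEq m] {Q : Matrix m m 𝕜}
    (hQ : Q ∈ unitaryGroup m 𝕜) (Y : Matrix m n 𝕜) : ‖Q * Y‖ = ‖Y‖ := by
  rw [← sq_eq_sq₀ (norm_nonneg _) (norm_nonneg _), frobenius_norm_sq_eq_re_trace,
    frobenius_norm_sq_eq_re_trace, conjTranspose_mul, Matrix.mul_assoc, ← Matrix.mul_assoc Qᴴ,
    ← star_eq_conjTranspose, mem_unitaryGroup_iff'.mp hQ, Matrix.one_mul]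

end Matrix

theorem poissonMatrix_transpose (n : ℕ) : (PoissonMatrix n)ᵀ = -PoissonMatrix n := by
  simp [PoissonMatrix, fromBlocks_transpose, fromBlocks_neg]

theorem poissonMatrix_mul_self (n : ℕ) : PoissonMatrix n * PoissonMatrix n = -1 := by
  simp [PoissonMatrix, fromBlocks_multiply, ← fromBlocks_one, fromBlocks_neg]

theorem poissonMatrix_mul_transpose (n : ℕ) : PoissonMatrix n * (PoissonMatrix n)ᵀ = 1 := by
  rw [poissonMatrix_transpose, Matrix.mul_neg, poissonMatrix_mul_self, neg_neg]

theorem poissonMatrix_transpose_mem_unitaryGroup (n : ℕ) :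
    (PoissonMatrix n)ᵀ ∈ unitaryGroup (Fin n ⊕ Fin n) ℝ := by
  rw [mem_unitaryGroup_iff', star_eq_conjTranspose, conjTranspose_eq_transpose_of_trivial,
    transpose_transpose, poissonMatrix_mul_transpose]

theorem projector_rotation_invariance_general (n k : ℕ)
    (E : Matrix (Fin n ⊕ Fin n) (Fin k) ℝ) :
    let V := Matrix.fromCols E ((PoissonMatrix n)ᵀ * E)
    let P := (1 : Matrix (Fin n ⊕ Fin n) (Fin n ⊕ Fin n) ℝ) - V * Vᵀ
    PoissonMatrix n * P * (PoissonMatrix n)ᵀ = P ∧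
      ∀ (m : ℕ) (X : Matrix (Fin n ⊕ Fin n) (Fin m) ℝ),
        ‖P * X‖ = ‖P * ((PoissonMatrix n)ᵀ * X)‖ := by
  intro V P
  set J := PoissonMatrix n
  have hVV : V * Vᵀ = E * Eᵀ - J * (E * Eᵀ) * J := by
    rw [transpose_fromCols, fromCols_mul_fromRows, transpose_mul, transpose_transpose,
      poissonMatrix_transpose]
    simp only [J, Matrix.neg_mul, Matrix.mul_assoc, sub_eq_add_neg]
  have hcomm : Commute J P := (Commute.one_right J).sub_right
    (hVV ▸ commute_sub_mul_mul_of_mul_self_eq_neg_one (poissonMatrix_mul_self n) _)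
  refine ⟨by rw [hcomm.eq, Matrix.mul_assoc, poissonMatrix_mul_transpose, Matrix.mul_one],
    fun m X => ?_⟩
  have hcommT : Commute Jᵀ P := poissonMatrix_transpose n ▸ hcomm.neg_left
  rw [← Matrix.mul_assoc, ← hcommT.eq, Matrix.mul_assoc,
    frobenius_norm_unitary_mul (poissonMatrix_transpose_mem_unitaryGroup n)]

/-- For `V = [E  J_{2n}ᵀ E]` and the orthogonal projector `P⊥ = I − V Vᵀ`, one has
`J_{2n} P⊥ J_{2n}ᵀ = P⊥` and hence `‖P⊥ X‖_F = ‖P⊥ J_{2n}ᵀ X‖_F` (Frobenius norm). -/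
theorem projector_rotation_invariance (n k : ℕ)
    (E : Matrix (Fin n ⊕ Fin n) (Fin k) ℝ)
    (horth : Eᵀ * E = 1)
    (hiso : Eᵀ * PoissonMatrix n * E = 0) :
    let V := Matrix.fromCols E ((PoissonMatrix n)ᵀ * E)
    let P := (1 : Matrix (Fin n ⊕ Fin n) (Fin n ⊕ Fin n) ℝ) - V * Vᵀ
    PoissonMatrix n * P * (PoissonMatrix n)ᵀ = P ∧
      ∀ (m : ℕ) (X : Matrix (Fin n ⊕ Fin n) (Fin m) ℝ),
        ‖P * X‖ = ‖P * ((PoissonMatrix n)ᵀ * X)‖ :=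
  projector_rotation_invariance_general n k E
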